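/- (Lemma 1, parametric DP pruning for fixed K.) Suppose for some m ∈ {k, ..., n-1} the changepoint vector τ ∈ T_{k-1,m} satisfies L_{k-1,m}(z, τ) > L^opt_{k-1,m}(z) for all z ∈ R. Then for all z ∈ R, L^opt_{k,n}(z) < L_{k-1,m}(z, τ) + C(x(z)_{m+1:n}); consequently, the concatenation concat(τ, m) is never an optimizer of L_{k,n}(z, ·) for any z ∈ R. -/

import Mathlib

/-- Segment mean of entries `s` through `e` of the sequence `x`. -/
noncomputable def segMean (x : ℕ → ℝ) (s e : ℕ) : ℝ :=
  (∑ i ∈ Finset.Icc s e, x i) / ((e - s + 1 : ℕ) : ℝ)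

/-- Segment cost `C(x_{s:e}) = ∑_{i=s}^e (x_i - x̄_{s:e})²`. -/
noncomputable def segCost (x : ℕ → ℝ) (s e : ℕ) : ℝ :=
  ∑ i ∈ Finset.Icc s e, (x i - segMean x s e) ^ 2

/-- The parametrized sequence `x(z) = a + b z`. -/
def paramSeq (a b : ℕ → ℝ) (z : ℝ) : ℕ → ℝ := fun i => a i + b i * z

/-- The segment boundaries `0 = τ₀ < τ₁ < ... < τ_k < τ_{k+1} = n` associated with a
changepoint vector `τ = (τ₁, ..., τ_k)`. -/
def bounds (n : ℕ) {k : ℕ} (τ : Fin k → ℕ) : Fin (k + 2) → ℕ :=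
  Fin.snoc (Fin.cons 0 τ) n

/-- `τ` is a valid `k`-dimensional changepoint vector for a length-`n` sequence:
strictly increasing with `1 ≤ τ_i ≤ n - 1`. -/
def validCP (n : ℕ) {k : ℕ} (τ : Fin k → ℕ) : Prop :=
  StrictMono τ ∧ ∀ i, 1 ≤ τ i ∧ τ i < n

/-- The segmentation loss `L_{k,n}(x, τ) = ∑_{κ=1}^{k+1} C(x_{τ_{κ-1}+1 : τ_κ})`. -/
noncomputable def cpLoss (x : ℕ → ℝ) (n : ℕ) {k : ℕ} (τ : Fin k → ℕ) : ℝ :=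
  ∑ κ : Fin (k + 1), segCost x (bounds n τ κ.castSucc + 1) (bounds n τ κ.succ)

/-- The optimal loss `L^opt_{k,n}(x) = min_{τ ∈ T_{k,n}} L_{k,n}(x, τ)`. -/
noncomputable def optLoss (x : ℕ → ℝ) (k n : ℕ) : ℝ :=
  sInf {r : ℝ | ∃ τ : Fin k → ℕ, validCP n τ ∧ r = cpLoss x n τ}

/-! Appending the changepoint `m` to a changepoint vector `σ` of the length-`m` problem adds
exactly the cost `C(x_{m+1:n})` of the last segment. Since `τ` is strictly suboptimal, some
valid `σ` beats it, and `concat(σ, m)` is a valid candidate for the `(k, n)` problem whose loss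
is strictly below `L_{k-1,m}(τ) + C(x_{m+1:n})`. -/

lemma segCost_nonneg (x : ℕ → ℝ) (s e : ℕ) : 0 ≤ segCost x s e :=
  Finset.sum_nonneg fun _ _ => sq_nonneg _

lemma cpLoss_nonneg (x : ℕ → ℝ) (n : ℕ) {k : ℕ} (τ : Fin k → ℕ) : 0 ≤ cpLoss x n τ :=
  Finset.sum_nonneg fun _ _ => segCost_nonneg _ _ _

lemma optLoss_le_cpLoss (x : ℕ → ℝ) {k n : ℕ} {τ : Fin k → ℕ} (hτ : validCP n τ) :
    optLoss x k n ≤ cpLoss x n τ :=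
  csInf_le ⟨0, by rintro r ⟨σ, -, rfl⟩; exact cpLoss_nonneg x n σ⟩ ⟨τ, hτ, rfl⟩

lemma exists_cpLoss_lt_of_optLoss_lt (x : ℕ → ℝ) {k n : ℕ} {τ : Fin k → ℕ}
    (hτ : validCP n τ) (hsub : optLoss x k n < cpLoss x n τ) :
    ∃ σ : Fin k → ℕ, validCP n σ ∧ cpLoss x n σ < cpLoss x n τ := by
  obtain ⟨_, ⟨σ, hσ, rfl⟩, hlt⟩ := exists_lt_of_csInf_lt (by exact ⟨_, τ, hτ, rfl⟩) hsub
  exact ⟨σ, hσ, hlt⟩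

lemma bounds_snoc_castSucc (m n : ℕ) {j : ℕ} (τ : Fin j → ℕ) (i : Fin (j + 2)) :
    bounds n (Fin.snoc τ m) i.castSucc = bounds m τ i := by
  simp [bounds, ← Fin.cons_snoc_eq_snoc_cons, Fin.snoc_castSucc]

lemma cpLoss_snoc (x : ℕ → ℝ) {j : ℕ} (τ : Fin j → ℕ) (m n : ℕ) :
    cpLoss x n (Fin.snoc τ m) = cpLoss x m τ + segCost x (m + 1) n := by
  unfold cpLoss
  rw [Fin.sum_univ_castSucc]
  congr 1
  · refine Finset.sum_congr rfl fun κ _ => ?_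
    rw [Fin.succ_castSucc, bounds_snoc_castSucc, bounds_snoc_castSucc]
  · have hlast : bounds n (Fin.snoc τ m) (Fin.last (j + 1)).castSucc = m := by
      simp [bounds]
    have hend : bounds n (Fin.snoc τ m) (Fin.last (j + 1)).succ = n := by
      simp [bounds]
    rw [hlast, hend]

lemma validCP_snoc {j m n : ℕ} {τ : Fin j → ℕ} (hτ : validCP m τ) (hm : 1 ≤ m) (hmn : m < n) :
    validCP n (Fin.snoc τ m) := by
  obtain ⟨hmono, hrange⟩ := hτ
  constructor
  · intro i i' h
    induction i' using Fin.lastCases with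
    | last =>
      obtain ⟨i, rfl⟩ := Fin.exists_castSucc_eq.mpr h.ne
      simpa only [Fin.snoc_castSucc, Fin.snoc_last] using (hrange i).2
    | cast i' =>
      obtain ⟨i, rfl⟩ := Fin.exists_castSucc_eq.mpr (h.trans (Fin.castSucc_lt_last i')).ne
      simpa only [Fin.snoc_castSucc] using hmono (Fin.castSucc_lt_castSucc_iff.mp h)
  · intro i
    induction i using Fin.lastCases with
    | last => simpa using ⟨hm, hmn⟩
    | cast i => simpa only [Fin.snoc_castSucc] using ⟨(hrange i).1, (hrange i).2.trans hmn⟩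

lemma optLoss_succ_lt_of_optLoss_lt (x : ℕ → ℝ) {j m n : ℕ} {τ : Fin j → ℕ}
    (hm : 1 ≤ m) (hmn : m < n) (hτ : validCP m τ) (hsub : optLoss x j m < cpLoss x m τ) :
    optLoss x (j + 1) n < cpLoss x m τ + segCost x (m + 1) n := by
  obtain ⟨σ, hσ, hlt⟩ := exists_cpLoss_lt_of_optLoss_lt x hτ hsub
  calc optLoss x (j + 1) n ≤ cpLoss x n (Fin.snoc σ m) :=
        optLoss_le_cpLoss x (validCP_snoc hσ hm hmn)
    _ = cpLoss x m σ + segCost x (m + 1) n := cpLoss_snoc x σ m n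
    _ < cpLoss x m τ + segCost x (m + 1) n := by linarith

theorem paraDP_prune_fixedK_general (a b : ℕ → ℝ) (j m n : ℕ) (τ : Fin j → ℕ)
    (hm1 : j + 1 ≤ m) (hm2 : m ≤ n - 1)
    (hτ : validCP m τ)
    (hsub : ∀ z : ℝ, optLoss (paramSeq a b z) j m < cpLoss (paramSeq a b z) m τ) :
    (∀ z : ℝ,
      optLoss (paramSeq a b z) (j + 1) n <
        cpLoss (paramSeq a b z) m τ + segCost (paramSeq a b z) (m + 1) n) ∧
    (∀ z : ℝ,
      optLoss (paramSeq a b z) (j + 1) n <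
        cpLoss (paramSeq a b z) n (Fin.snoc τ m)) := by
  have hlt : ∀ z : ℝ, optLoss (paramSeq a b z) (j + 1) n <
      cpLoss (paramSeq a b z) m τ + segCost (paramSeq a b z) (m + 1) n := fun z =>
    optLoss_succ_lt_of_optLoss_lt _ (by omega) (by omega) hτ (hsub z)
  exact ⟨hlt, fun z => cpLoss_snoc (paramSeq a b z) τ m n ▸ hlt z⟩

/-- Lemma 1 (parametric DP pruning, fixed `K`): if the `j`-dimensional changepoint
vector `τ` (for the length-`m` subproblem, `m ∈ {j+1, ..., n-1}`) is strictly
suboptimal for every `z`, then for every `z` the optimal loss `L^opt_{j+1,n}(z)` is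
strictly smaller than `L_{j,m}(z, τ) + C(x(z)_{m+1:n})`, and hence the concatenation
`concat(τ, m)` is never an optimizer of `L_{j+1,n}(z, ·)` for any `z`. -/
theorem paraDP_prune_fixedK (a b : ℕ → ℝ) (j m n : ℕ) (τ : Fin j → ℕ)
    (hm1 : j + 1 ≤ m) (hm2 : m ≤ n - 1) (hn : 1 ≤ n)
    (hτ : validCP m τ)
    (hsub : ∀ z : ℝ, optLoss (paramSeq a b z) j m < cpLoss (paramSeq a b z) m τ) :
    (∀ z : ℝ,
      optLoss (paramSeq a b z) (j + 1) n <
        cpLoss (paramSeq a b z) m τ + segCost (paramSeq a b z) (m + 1) n) ∧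
    (∀ z : ℝ,
      optLoss (paramSeq a b z) (j + 1) n <
        cpLoss (paramSeq a b z) n (Fin.snoc τ m)) :=
  paraDP_prune_fixedK_general a b j m n τ hm1 hm2 hτ hsub
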